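/- Uniqueness for the discrete MHD system under smallness: if two discrete solutions (u_h, b_h), (u_h', b_h') ∈ V_h × X_h both satisfy the discrete weak MHD system and the a priori bound ‖(u_h, b_h)‖, ‖(u_h', b_h')‖ ≤ η·m* with m* = min(R_e⁻¹, R_m⁻¹λ₀*), and the condition N̂₂ η < 1 holds where N̂₂ = √2 λ₁ max{λ₁*, λ₂*} bounds the combined trilinear forms, then (u_h, b_h) = (u_h', b_h'). -/

import Mathlib

/-!
Subtracting the two discrete systems and testing with the difference `(w, d)` of the solutions,
the skew-symmetry of `c₀` and the cancellation of the cross terms of `c₁` leave the energy identity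
`a_s(w,w) + a_m(d,d) = -(c₀(w;u,w) - c₁(d;w,b) + c₁(d;u,d))`. Coercivity bounds the left side from
below by `m* ‖(w,d)‖²` and the trilinear bound with the a priori bound bounds the right side by
`N̂₂ η m* ‖(w,d)‖²`; since `N̂₂ η < 1`, this forces `‖(w,d)‖ = 0`.
-/

lemma eq_zero_of_mul_sq_le_mul_sq {m N q η p : ℝ} (hm : 0 < m) (hq : 0 ≤ q)
    (hqη : q ≤ η * m) (hsmall : N * η < 1) (h : m * p ^ 2 ≤ N * q * p ^ 2) : p = 0 := by
  by_contra hp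
  have hmNq : m ≤ N * q := le_of_mul_le_mul_right h (by positivity)
  rcases le_or_gt N 0 with hN | hN
  · nlinarith [mul_nonneg (neg_nonneg.mpr hN) hq]
  · nlinarith [mul_le_mul_of_nonneg_left hqη hN.le, mul_lt_mul_of_pos_right hsmall hm]

/-- `(u, b)` solves the discrete MHD system tested against discretely divergence-free functions,
where the pressure and multiplier terms vanish. -/
structure IsDiscreteMHDSolution {V C : Type*} [AddCommGroup V] [Module ℝ V] [AddCommGroup C]
    [Module ℝ C] (Vh : Submodule ℝ V) (Xh : Submodule ℝ C)
    (a_s : V →ₗ[ℝ] V →ₗ[ℝ] ℝ) (a_m : C →ₗ[ℝ] C →ₗ[ℝ] ℝ)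
    (c₀ : V →ₗ[ℝ] V →ₗ[ℝ] V →ₗ[ℝ] ℝ) (c₁ : C →ₗ[ℝ] V →ₗ[ℝ] C →ₗ[ℝ] ℝ)
    (f : V →ₗ[ℝ] ℝ) (g : C →ₗ[ℝ] ℝ) (u : V) (b : C) : Prop where
  mem_Vh : u ∈ Vh
  mem_Xh : b ∈ Xh
  momentum : ∀ v ∈ Vh, a_s u v + c₀ u u v - c₁ b v b = f v
  induction : ∀ c ∈ Xh, a_m b c + c₁ b u c = g c

namespace IsDiscreteMHDSolution

variable {V C : Type*} [AddCommGroup V] [Module ℝ V] [AddCommGroup C] [Module ℝ C]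
  {Vh : Submodule ℝ V} {Xh : Submodule ℝ C}
  {a_s : V →ₗ[ℝ] V →ₗ[ℝ] ℝ} {a_m : C →ₗ[ℝ] C →ₗ[ℝ] ℝ}
  {c₀ : V →ₗ[ℝ] V →ₗ[ℝ] V →ₗ[ℝ] ℝ} {c₁ : C →ₗ[ℝ] V →ₗ[ℝ] C →ₗ[ℝ] ℝ}
  {f : V →ₗ[ℝ] ℝ} {g : C →ₗ[ℝ] ℝ} {u u' : V} {b b' : C}

theorem energy_identity (hs : IsDiscreteMHDSolution Vh Xh a_s a_m c₀ c₁ f g u b)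
    (hs' : IsDiscreteMHDSolution Vh Xh a_s a_m c₀ c₁ f g u' b')
    (hc₀ : ∀ w v : V, c₀ w v v = 0) :
    a_s (u - u') (u - u') + a_m (b - b') (b - b') =
      -(c₀ (u - u') u (u - u') - c₁ (b - b') (u - u') b + c₁ (b - b') u (b - b')) := by
  have hw : u - u' ∈ Vh := Vh.sub_mem hs.mem_Vh hs'.mem_Vh
  have hd : b - b' ∈ Xh := Xh.sub_mem hs.mem_Xh hs'.mem_Xh
  have e₁ := hs.momentum _ hw
  have e₁' := hs'.momentum _ hw
  have e₂ := hs.induction _ hd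
  have e₂' := hs'.induction _ hd
  have hdiag := hc₀ u' (u - u')
  simp only [map_sub, LinearMap.sub_apply] at e₁ e₁' e₂ e₂' hdiag ⊢
  linarith

theorem eq_of_small {PN : V → C → ℝ} {m N η : ℝ}
    (hs : IsDiscreteMHDSolution Vh Xh a_s a_m c₀ c₁ f g u b)
    (hs' : IsDiscreteMHDSolution Vh Xh a_s a_m c₀ c₁ f g u' b')
    (hc₀ : ∀ w v : V, c₀ w v v = 0) (hm : 0 < m)
    (hPNnn : ∀ v c, 0 ≤ PN v c) (hPNzero : ∀ v c, PN v c = 0 → v = 0 ∧ c = 0)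
    (hcoer : ∀ v ∈ Vh, ∀ c ∈ Xh, m * PN v c ^ 2 ≤ a_s v v + a_m c c)
    (hTri : ∀ w ∈ Vh, ∀ d ∈ Xh, ∀ vt ∈ Vh, ∀ ct ∈ Xh, ∀ v ∈ Vh, ∀ c ∈ Xh,
      |c₀ w vt v - c₁ d v ct + c₁ d vt c| ≤ N * PN w d * PN vt ct * PN v c)
    (hsmall : N * η < 1) (hbound : PN u b ≤ η * m) :
    u = u' ∧ b = b' := by
  have hw : u - u' ∈ Vh := Vh.sub_mem hs.mem_Vh hs'.mem_Vh
  have hd : b - b' ∈ Xh := Xh.sub_mem hs.mem_Xh hs'.mem_Xh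
  have hT := hTri _ hw _ hd _ hs.mem_Vh _ hs.mem_Xh _ hw _ hd
  have hPN : PN (u - u') (b - b') = 0 := by
    refine eq_zero_of_mul_sq_le_mul_sq hm (hPNnn u b) hbound hsmall ?_
    calc m * PN (u - u') (b - b') ^ 2
        ≤ a_s (u - u') (u - u') + a_m (b - b') (b - b') := hcoer _ hw _ hd
      _ ≤ |c₀ (u - u') u (u - u') - c₁ (b - b') (u - u') b + c₁ (b - b') u (b - b')| := by
        rw [hs.energy_identity hs' hc₀]; exact neg_le_abs _
      _ ≤ N * PN u b * PN (u - u') (b - b') ^ 2 := hT.trans_eq (by ring)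
  obtain ⟨hu, hb⟩ := hPNzero _ _ hPN
  exact ⟨sub_eq_zero.mp hu, sub_eq_zero.mp hb⟩

end IsDiscreteMHDSolution

theorem stmt_18_general {V C : Type*}
    [AddCommGroup V] [Module ℝ V] [AddCommGroup C] [Module ℝ C]
    (Vh : Submodule ℝ V) (Xh : Submodule ℝ C)
    (a_s : V →ₗ[ℝ] V →ₗ[ℝ] ℝ) (a_m : C →ₗ[ℝ] C →ₗ[ℝ] ℝ)
    (c₀ : V →ₗ[ℝ] V →ₗ[ℝ] V →ₗ[ℝ] ℝ) (c₁ : C →ₗ[ℝ] V →ₗ[ℝ] C →ₗ[ℝ] ℝ)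
    (f : V →ₗ[ℝ] ℝ) (g : C →ₗ[ℝ] ℝ)
    (PN : V → C → ℝ)
    (Re Rm lam0s lam1 lam1s lam2s η : ℝ)
    (hRe : 0 < Re) (hRm : 0 < Rm) (hlam0s : 0 < lam0s)
    (hPNnn : ∀ v c, 0 ≤ PN v c)
    (hPNzero : ∀ v c, PN v c = 0 → v = 0 ∧ c = 0)
    (hskew : ∀ w a v : V, c₀ w a v = - c₀ w v a)
    (hcoer : ∀ v ∈ Vh, ∀ c ∈ Xh,
      min Re⁻¹ (Rm⁻¹ * lam0s) * (PN v c) ^ 2 ≤ a_s v v + a_m c c)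
    (hTri : ∀ w ∈ Vh, ∀ d ∈ Xh, ∀ vt ∈ Vh, ∀ ct ∈ Xh, ∀ v ∈ Vh, ∀ c ∈ Xh,
      |c₀ w vt v - c₁ d v ct + c₁ d vt c|
        ≤ (Real.sqrt 2 * lam1 * max lam1s lam2s) * PN w d * PN vt ct * PN v c)
    (hsmall : (Real.sqrt 2 * lam1 * max lam1s lam2s) * η < 1)
    (u u' : V) (b b' : C)
    (hu : u ∈ Vh) (hu' : u' ∈ Vh) (hb : b ∈ Xh) (hb' : b' ∈ Xh)
    (hbound : PN u b ≤ η * min Re⁻¹ (Rm⁻¹ * lam0s))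
    (hsys1 : ∀ v ∈ Vh, a_s u v + c₀ u u v - c₁ b v b = f v)
    (hsys1' : ∀ v ∈ Vh, a_s u' v + c₀ u' u' v - c₁ b' v b' = f v)
    (hsys2 : ∀ c ∈ Xh, a_m b c + c₁ b u c = g c)
    (hsys2' : ∀ c ∈ Xh, a_m b' c + c₁ b' u' c = g c) :
    u = u' ∧ b = b' := by
  have hc₀ (w v : V) : c₀ w v v = 0 := by linarith [hskew w v v]
  have hm : 0 < min Re⁻¹ (Rm⁻¹ * lam0s) := lt_min (by positivity) (by positivity)
  exact IsDiscreteMHDSolution.eq_of_small ⟨hu, hb, hsys1, hsys2⟩ ⟨hu', hb', hsys1', hsys2'⟩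
    hc₀ hm hPNnn hPNzero hcoer hTri hsmall hbound

/-- Uniqueness for the discrete MHD system under the smallness
condition: if `(u_h, b_h)` and `(u_h', b_h')` in `V_h × X_h` both solve the
discrete weak MHD system (restricted to discretely divergence-free test
functions, so the pressure and multiplier terms drop out), both satisfy the
a priori bound `‖(·,·)‖ ≤ η·m*` with `m* = min(R_e⁻¹, R_m⁻¹λ₀*)`, the forms are
coercive with constant `m*` and the combined trilinear bound with
`N̂₂ = √2 λ₁ max{λ₁*, λ₂*}` holds on the discrete spaces, and `N̂₂ η < 1`,
then the two solutions coincide.  `PN v c` denotes `‖(v,c)‖`. -/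
theorem stmt_18 {V C : Type*}
    [AddCommGroup V] [Module ℝ V] [AddCommGroup C] [Module ℝ C]
    (Vh : Submodule ℝ V) (Xh : Submodule ℝ C)
    (a_s : V →ₗ[ℝ] V →ₗ[ℝ] ℝ) (a_m : C →ₗ[ℝ] C →ₗ[ℝ] ℝ)
    (c₀ : V →ₗ[ℝ] V →ₗ[ℝ] V →ₗ[ℝ] ℝ) (c₁ : C →ₗ[ℝ] V →ₗ[ℝ] C →ₗ[ℝ] ℝ)
    (f : V →ₗ[ℝ] ℝ) (g : C →ₗ[ℝ] ℝ)
    (PN : V → C → ℝ)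
    (Re Rm lam0s lam1 lam1s lam2s η : ℝ)
    (hRe : 0 < Re) (hRm : 0 < Rm) (hlam0s : 0 < lam0s) (hη : 0 ≤ η)
    (hPNnn : ∀ v c, 0 ≤ PN v c)
    (hPNzero : ∀ v c, PN v c = 0 → v = 0 ∧ c = 0)
    (hskew : ∀ w a v : V, c₀ w a v = - c₀ w v a)
    (hcoer : ∀ v ∈ Vh, ∀ c ∈ Xh,
      min Re⁻¹ (Rm⁻¹ * lam0s) * (PN v c) ^ 2 ≤ a_s v v + a_m c c)
    (hTri : ∀ w ∈ Vh, ∀ d ∈ Xh, ∀ vt ∈ Vh, ∀ ct ∈ Xh, ∀ v ∈ Vh, ∀ c ∈ Xh,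
      |c₀ w vt v - c₁ d v ct + c₁ d vt c|
        ≤ (Real.sqrt 2 * lam1 * max lam1s lam2s) * PN w d * PN vt ct * PN v c)
    (hsmall : (Real.sqrt 2 * lam1 * max lam1s lam2s) * η < 1)
    (u u' : V) (b b' : C)
    (hu : u ∈ Vh) (hu' : u' ∈ Vh) (hb : b ∈ Xh) (hb' : b' ∈ Xh)
    (hbound : PN u b ≤ η * min Re⁻¹ (Rm⁻¹ * lam0s))
    (hbound' : PN u' b' ≤ η * min Re⁻¹ (Rm⁻¹ * lam0s))
    (hsys1 : ∀ v ∈ Vh, a_s u v + c₀ u u v - c₁ b v b = f v)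
    (hsys1' : ∀ v ∈ Vh, a_s u' v + c₀ u' u' v - c₁ b' v b' = f v)
    (hsys2 : ∀ c ∈ Xh, a_m b c + c₁ b u c = g c)
    (hsys2' : ∀ c ∈ Xh, a_m b' c + c₁ b' u' c = g c) :
    u = u' ∧ b = b' :=
  stmt_18_general Vh Xh a_s a_m c₀ c₁ f g PN Re Rm lam0s lam1 lam1s lam2s η hRe hRm hlam0s hPNnn
    hPNzero hskew hcoer hTri hsmall u u' b b' hu hu' hb hb' hbound hsys1 hsys1' hsys2 hsys2'
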